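/- (Linear contraction under strong convexity) Let f be convex, differentiable, L-smooth and m-strongly convex with m > 0, g convex, F = f + g with minimizer x*. Let U = diag(u) with uᵢ > 0 and U ⪰ L·I, and x⁺ = prox_{g,U}(x − U⁻¹∇f(x)). Then ‖x⁺ − x*‖²_U ≤ (1 − m/u_max)·‖x − x*‖²_U, where u_max = maxᵢ uᵢ. -/

import Mathlib

noncomputable section

/-- Euclidean dot product on `Fin n → ℝ`. -/
def dot {n : ℕ} (a b : Fin n → ℝ) : ℝ := ∑ i, a i * b i

/-- Squared Euclidean norm. -/
def sqnorm {n : ℕ} (a : Fin n → ℝ) : ℝ := dot a a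

/-!
Write `‖a‖²_M = aᵀ M a`. For every `z`, one proximal-gradient step satisfies
`F(x⁺) - F(z) ≤ ½ (‖x - z‖²_M - ‖x⁺ - z‖²_M - m ‖x - z‖²)`: add the descent lemma for `f`
(where `M ⪰ L·I` replaces `L ‖x⁺ - x‖²` by `‖x⁺ - x‖²_M`), the strong-convexity lower bound for
`f` at `z`, and the first-order optimality condition of `x⁺` for the proximal problem, and
collect the quadratic terms by polarization. At `z = x*` the left side is nonnegative, and
`‖a‖²_U ≤ u_max ‖a‖²` turns `m ‖x - x*‖²` into `(m / u_max) ‖x - x*‖²_U`.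

Both quadratic bounds for `f` compare `t ↦ f (a + t • d)` with a parabola having the same value
and slope at `0`: the difference is monotone on `[0, 1]`.
-/

open Set Matrix Filter Topology

section Dot

variable {n : ℕ}

theorem dot_eq_dotProduct (a b : Fin n → ℝ) : dot a b = a ⬝ᵥ b := rfl

theorem dot_comm (a b : Fin n → ℝ) : dot a b = dot b a := dotProduct_comm a b

theorem dot_sub_left (a b c : Fin n → ℝ) : dot (a - b) c = dot a c - dot b c :=
  sub_dotProduct a b c

theorem dot_sub_right (a b c : Fin n → ℝ) : dot a (b - c) = dot a b - dot a c :=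
  dotProduct_sub a b c

theorem dot_smul_left (t : ℝ) (a b : Fin n → ℝ) : dot (t • a) b = t * dot a b :=
  smul_dotProduct t a b

theorem dot_smul_right (t : ℝ) (a b : Fin n → ℝ) : dot a (t • b) = t * dot a b :=
  dotProduct_smul t a b

theorem sqnorm_nonneg (a : Fin n → ℝ) : 0 ≤ sqnorm a :=
  Finset.sum_nonneg (s := Finset.univ) fun i _ => mul_self_nonneg (a i)

theorem sqnorm_smul (t : ℝ) (a : Fin n → ℝ) : sqnorm (t • a) = t ^ 2 * sqnorm a := by
  rw [sqnorm, dot_smul_left, dot_smul_right, sqnorm]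
  ring

theorem sqrt_sqnorm_smul {t : ℝ} (ht : 0 ≤ t) (a : Fin n → ℝ) :
    √(sqnorm (t • a)) = t * √(sqnorm a) := by
  rw [sqnorm_smul, Real.sqrt_mul (sq_nonneg t), Real.sqrt_sq ht]

theorem dot_le_sqrt_mul_sqrt (a b : Fin n → ℝ) : dot a b ≤ √(sqnorm a) * √(sqnorm b) := by
  simpa only [sqnorm, dot, sq] using Real.sum_mul_le_sqrt_mul_sqrt Finset.univ a b

theorem dot_mulVec_comm {M : Matrix (Fin n) (Fin n) ℝ} (hM : M.IsSymm) (a b : Fin n → ℝ) :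
    dot a (M *ᵥ b) = dot b (M *ᵥ a) := by
  rw [dot_eq_dotProduct, dotProduct_mulVec, ← hM.eq, vecMul_transpose, hM.eq, dot_eq_dotProduct,
    dotProduct_comm]

theorem dot_sub_mulVec_sub {M : Matrix (Fin n) (Fin n) ℝ} (hM : M.IsSymm) (a b : Fin n → ℝ) :
    dot (a - b) (M *ᵥ (a - b)) = dot a (M *ᵥ a) - 2 * dot a (M *ᵥ b) + dot b (M *ᵥ b) := by
  rw [mulVec_sub, dot_sub_left, dot_sub_right, dot_sub_right, dot_mulVec_comm hM b a]
  ring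

theorem dot_inv_mulVec_mulVec {M : Matrix (Fin n) (Fin n) ℝ} (hM : M.IsSymm)
    (hdet : IsUnit M.det) (a b : Fin n → ℝ) : dot (M⁻¹ *ᵥ a) (M *ᵥ b) = dot a b := by
  rw [dot_mulVec_comm hM, mulVec_mulVec, mul_nonsing_inv M hdet, one_mulVec, dot_comm]

theorem dot_sub_mulVec_sub_comm (M : Matrix (Fin n) (Fin n) ℝ) (a b : Fin n → ℝ) :
    dot (a - b) (M *ᵥ (a - b)) = dot (b - a) (M *ᵥ (b - a)) := by
  rw [← neg_sub b a, mulVec_neg, dot_eq_dotProduct, neg_dotProduct, dotProduct_neg, neg_neg]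
  rfl

theorem sqnorm_sub_comm (a b : Fin n → ℝ) : sqnorm (a - b) = sqnorm (b - a) := by
  rw [← neg_sub b a, sqnorm, dot_eq_dotProduct, neg_dotProduct, dotProduct_neg, neg_neg]
  rfl

theorem mul_sqnorm_le_of_posSemidef {M : Matrix (Fin n) (Fin n) ℝ} {L : ℝ}
    (hM : (M - L • (1 : Matrix (Fin n) (Fin n) ℝ)).PosSemidef) (a : Fin n → ℝ) :
    L * sqnorm a ≤ dot a (M *ᵥ a) := by
  have h := hM.dotProduct_mulVec_nonneg a
  rw [star_trivial, sub_mulVec, smul_mulVec, one_mulVec, ← dot_eq_dotProduct, dot_sub_right,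
    dot_smul_right] at h
  unfold sqnorm
  linarith

theorem dot_diagonal_mulVec_le {u : Fin n → ℝ} {c : ℝ} (hc : ∀ i, u i ≤ c) (a : Fin n → ℝ) :
    dot a (diagonal u *ᵥ a) ≤ c * sqnorm a := by
  simp only [sqnorm, dot, mulVec_diagonal, Finset.mul_sum]
  exact Finset.sum_le_sum fun i _ => by nlinarith [hc i, mul_self_nonneg (a i)]

end Dot

theorem add_deriv_add_half_le_of_hasDerivAt {φ φ' : ℝ → ℝ} {c : ℝ} (hφ : ∀ t, HasDerivAt φ (φ' t) t)
    (hφ' : ∀ t ∈ Ioo (0 : ℝ) 1, φ' 0 + c * t ≤ φ' t) : φ 0 + φ' 0 + c / 2 ≤ φ 1 := by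
  set ψ : ℝ → ℝ := fun s => φ s - φ' 0 * s - c / 2 * s ^ 2
  have hψ : ∀ t, HasDerivAt ψ (φ' t - φ' 0 - c * t) t := by
    intro t
    refine (((hφ t).sub ((hasDerivAt_id' t).const_mul (φ' 0))).sub
      ((hasDerivAt_pow 2 t).const_mul (c / 2))).congr_deriv ?_
    norm_num
    ring
  have hmono : MonotoneOn ψ (Icc 0 1) := by
    refine monotoneOn_of_hasDerivWithinAt_nonneg (convex_Icc 0 1)
      (fun t _ => (hψ t).continuousAt.continuousWithinAt) (fun t _ => (hψ t).hasDerivWithinAt) ?_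
    intro t ht
    rw [interior_Icc] at ht
    linarith [hφ' t ht]
  have h01 := hmono (left_mem_Icc.2 zero_le_one) (right_mem_Icc.2 zero_le_one) zero_le_one
  simp only [ψ] at h01
  linarith

theorem ConvexOn.sub_le_of_isMinOn_add {E : Type*} [AddCommGroup E] [Module ℝ E] {g q : E → ℝ}
    (hg : ConvexOn ℝ univ g) {v₀ e : E} {A B : ℝ}
    (hq : ∀ t : ℝ, q (v₀ + t • e) = q v₀ + t * A + t ^ 2 * B)
    (hmin : IsMinOn (fun v => g v + q v) univ v₀) : g v₀ - A ≤ g (v₀ + e) := by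
  -- minimality along the segment, divided by `t`, leaves an error `t * B` that vanishes as `t → 0⁺`
  have hsmall : ∀ t ∈ Ioo (0 : ℝ) 1, 0 ≤ g (v₀ + e) - g v₀ + A + t * B := by
    intro t ⟨ht0, ht1⟩
    have hconv := hg.2 (mem_univ v₀) (mem_univ (v₀ + e)) (sub_nonneg.2 ht1.le) ht0.le
      (sub_add_cancel 1 t)
    have hline : (1 - t) • v₀ + t • (v₀ + e) = v₀ + t • e := by
      rw [smul_add, ← add_assoc, ← add_smul, sub_add_cancel, one_smul]
    rw [hline, smul_eq_mul, smul_eq_mul] at hconv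
    have hle := isMinOn_iff.1 hmin (v₀ + t • e) (mem_univ _)
    rw [hq] at hle
    nlinarith
  have hlim : Tendsto (fun t : ℝ => g (v₀ + e) - g v₀ + A + t * B) (𝓝[>] 0)
      (𝓝 (g (v₀ + e) - g v₀ + A)) := by
    refine Tendsto.mono_left ?_ nhdsWithin_le_nhds
    exact (by fun_prop : Continuous fun t : ℝ => g (v₀ + e) - g v₀ + A + t * B).tendsto' 0 _
      (by simp)
  have := ge_of_tendsto hlim (eventually_of_mem (Ioo_mem_nhdsGT one_pos) hsmall)
  linarith

section LineDerivative

variable {n : ℕ} {f : (Fin n → ℝ) → ℝ} {f' : (Fin n → ℝ) → (Fin n → ℝ)}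

theorem hasDerivAt_apply_add_smul
    (hdiff : ∀ x v, HasDerivAt (fun t : ℝ => f (x + t • v)) (dot (f' x) v) 0)
    (a d : Fin n → ℝ) (t : ℝ) :
    HasDerivAt (fun s : ℝ => f (a + s • d)) (dot (f' (a + t • d)) d) t := by
  refine (HasDerivAt.comp_sub_const t t (by rw [sub_self]; exact hdiff (a + t • d) d))
    |>.congr_of_eventuallyEq (.of_forall fun s => ?_)
  show f (a + s • d) = f (a + t • d + (s - t) • d)
  rw [add_assoc, ← add_smul, add_sub_cancel]

theorem le_apply_add_of_strongMonotone
    (hdiff : ∀ x v, HasDerivAt (fun t : ℝ => f (x + t • v)) (dot (f' x) v) 0) {m : ℝ}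
    (hstrong : ∀ x y, m * sqnorm (x - y) ≤ dot (f' x - f' y) (x - y)) (a d : Fin n → ℝ) :
    f a + dot (f' a) d + m / 2 * sqnorm d ≤ f (a + d) := by
  have h := add_deriv_add_half_le_of_hasDerivAt (hasDerivAt_apply_add_smul hdiff a d)
    (c := m * sqnorm d) ?_
  · simp only [zero_smul, add_zero, one_smul] at h
    linarith
  rintro t ⟨ht0, -⟩
  have hs := hstrong (a + t • d) a
  rw [add_sub_cancel_left, sqnorm_smul, dot_smul_right, dot_sub_left] at hs
  simp only [zero_smul, add_zero]
  nlinarith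

theorem apply_add_le_of_lipschitz
    (hdiff : ∀ x v, HasDerivAt (fun t : ℝ => f (x + t • v)) (dot (f' x) v) 0) {L : ℝ}
    (hsmooth : ∀ x y, √(sqnorm (f' x - f' y)) ≤ L * √(sqnorm (x - y))) (a d : Fin n → ℝ) :
    f (a + d) ≤ f a + dot (f' a) d + L / 2 * sqnorm d := by
  have h := add_deriv_add_half_le_of_hasDerivAt (φ := fun s => -f (a + s • d))
    (φ' := fun t => -dot (f' (a + t • d)) d) (c := -(L * sqnorm d))
    (fun t => (hasDerivAt_apply_add_smul hdiff a d t).neg) ?_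
  · simp only [zero_smul, add_zero, one_smul] at h
    linarith
  rintro t ⟨ht0, -⟩
  have hs := hsmooth (a + t • d) a
  rw [add_sub_cancel_left, sqrt_sqnorm_smul ht0.le] at hs
  have hcs : dot (f' (a + t • d)) d - dot (f' a) d ≤ L * sqnorm d * t :=
    calc _ = dot (f' (a + t • d) - f' a) d := (dot_sub_left _ _ _).symm
      _ ≤ √(sqnorm (f' (a + t • d) - f' a)) * √(sqnorm d) := dot_le_sqrt_mul_sqrt _ _
      _ ≤ L * (t * √(sqnorm d)) * √(sqnorm d) :=
          mul_le_mul_of_nonneg_right hs (Real.sqrt_nonneg _)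
      _ = L * sqnorm d * t := by
          rw [mul_assoc, mul_assoc, Real.mul_self_sqrt (sqnorm_nonneg d)]
          ring
  simp only [zero_smul, add_zero]
  linarith

end LineDerivative

section ProximalGradient

variable {n : ℕ} {M : Matrix (Fin n) (Fin n) ℝ}

theorem prox_optimality {g : (Fin n → ℝ) → ℝ} (hg : ConvexOn ℝ univ g) (hM : M.IsSymm)
    {w p : Fin n → ℝ} (hp : IsMinOn (fun v => g v + 1 / 2 * dot (w - v) (M *ᵥ (w - v))) univ p)
    (z : Fin n → ℝ) : g p + dot (w - p) (M *ᵥ (z - p)) ≤ g z := by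
  have h := hg.sub_le_of_isMinOn_add (e := z - p) (A := -dot (w - p) (M *ᵥ (z - p)))
    (B := 1 / 2 * dot (z - p) (M *ᵥ (z - p))) ?_ hp
  · rwa [add_sub_cancel, sub_neg_eq_add] at h
  intro t
  rw [show w - (p + t • (z - p)) = (w - p) - t • (z - p) by abel, dot_sub_mulVec_sub hM,
    mulVec_smul, dot_smul_right, dot_smul_left, dot_smul_right]
  ring

theorem prox_grad_step_le {f g : (Fin n → ℝ) → ℝ} {f' : (Fin n → ℝ) → (Fin n → ℝ)} {L m : ℝ}
    (hg : ConvexOn ℝ univ g)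
    (hdiff : ∀ x v, HasDerivAt (fun t : ℝ => f (x + t • v)) (dot (f' x) v) 0)
    (hsmooth : ∀ x y, √(sqnorm (f' x - f' y)) ≤ L * √(sqnorm (x - y)))
    (hstrong : ∀ x y, m * sqnorm (x - y) ≤ dot (f' x - f' y) (x - y))
    (hM : M.IsSymm) (hdet : IsUnit M.det)
    (hML : (M - L • (1 : Matrix (Fin n) (Fin n) ℝ)).PosSemidef)
    {x p : Fin n → ℝ}
    (hp : IsMinOn (fun v => g v + 1 / 2 *
      dot ((x - M⁻¹ *ᵥ f' x) - v) (M *ᵥ ((x - M⁻¹ *ᵥ f' x) - v))) univ p)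
    (z : Fin n → ℝ) :
    f p + g p - (f z + g z) ≤
      1 / 2 * (dot (x - z) (M *ᵥ (x - z)) - dot (p - z) (M *ᵥ (p - z)) - m * sqnorm (x - z)) := by
  have hprox := prox_optimality hg hM hp z
  rw [sub_right_comm, dot_sub_left, dot_inv_mulVec_mulVec hM hdet] at hprox
  have hup := apply_add_le_of_lipschitz hdiff hsmooth x (p - x)
  have hlow := le_apply_add_of_strongMonotone hdiff hstrong x (z - x)
  rw [add_sub_cancel] at hup hlow
  have hLM := mul_sqnorm_le_of_posSemidef hML (p - x)
  have hgrad : dot (f' x) (z - p) = dot (f' x) (z - x) - dot (f' x) (p - x) := by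
    rw [← dot_sub_right, sub_sub_sub_cancel_right]
  have hpol := dot_sub_mulVec_sub hM (x - p) (z - p)
  rw [sub_sub_sub_cancel_right, dot_sub_mulVec_sub_comm M x p, dot_sub_mulVec_sub_comm M z p]
    at hpol
  rw [sqnorm_sub_comm] at hlow
  linarith

end ProximalGradient

theorem linear_contraction_strongly_convex_general {n : ℕ} (f g : (Fin n → ℝ) → ℝ)
    (f' : (Fin n → ℝ) → (Fin n → ℝ)) (L m : ℝ) (hm : 0 < m)
    (hgconv : ConvexOn ℝ Set.univ g)
    (hdiff : ∀ x v, HasDerivAt (fun t : ℝ => f (x + t • v)) (dot (f' x) v) 0)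
    (hsmooth : ∀ x y, Real.sqrt (sqnorm (f' x - f' y)) ≤ L * Real.sqrt (sqnorm (x - y)))
    (hstrong : ∀ x y, m * sqnorm (x - y) ≤ dot (f' x - f' y) (x - y))
    (u : Fin n → ℝ) (hu : ∀ i, 0 < u i)
    (hUL : ((Matrix.diagonal u) - L • (1 : Matrix (Fin n) (Fin n) ℝ)).PosSemidef)
    (umax : ℝ) (humax : IsGreatest (Set.range u) umax)
    (xstar : Fin n → ℝ) (hxstar : IsMinOn (fun z => f z + g z) Set.univ xstar)
    (x xplus : Fin n → ℝ)
    (hxplus : IsMinOn (fun v => g v + (1 / 2) *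
        dot ((x - (Matrix.diagonal u)⁻¹.mulVec (f' x)) - v)
            ((Matrix.diagonal u).mulVec ((x - (Matrix.diagonal u)⁻¹.mulVec (f' x)) - v)))
      Set.univ xplus) :
    dot (xplus - xstar) ((Matrix.diagonal u).mulVec (xplus - xstar)) ≤
      (1 - m / umax) * dot (x - xstar) ((Matrix.diagonal u).mulVec (x - xstar)) := by
  obtain ⟨i₀, rfl⟩ := humax.1
  have hdet : IsUnit (diagonal u).det := by
    rw [det_diagonal, isUnit_iff_ne_zero]
    exact Finset.prod_ne_zero_iff.2 fun i _ => (hu i).ne'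
  have hstep := prox_grad_step_le hgconv hdiff hsmooth hstrong (isSymm_diagonal u) hdet hUL
    hxplus xstar
  have hopt := isMinOn_iff.1 hxstar xplus (mem_univ _)
  have hmax := dot_diagonal_mulVec_le (fun i => humax.2 (mem_range_self i)) (x - xstar)
  have hscale : m / u i₀ * dot (x - xstar) (diagonal u *ᵥ (x - xstar)) ≤
      m * sqnorm (x - xstar) :=
    calc _ ≤ m / u i₀ * (u i₀ * sqnorm (x - xstar)) :=
          mul_le_mul_of_nonneg_left hmax (div_nonneg hm.le (hu i₀).le)
      _ = m * sqnorm (x - xstar) := by field_simp [(hu i₀).ne']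
  rw [sub_mul, one_mul]
  linarith

theorem linear_contraction_strongly_convex {n : ℕ} (f g : (Fin n → ℝ) → ℝ)
    (f' : (Fin n → ℝ) → (Fin n → ℝ)) (L m : ℝ) (hL : 0 < L) (hm : 0 < m)
    (hfconv : ConvexOn ℝ Set.univ f) (hgconv : ConvexOn ℝ Set.univ g)
    (hdiff : ∀ x v, HasDerivAt (fun t : ℝ => f (x + t • v)) (dot (f' x) v) 0)
    (hsmooth : ∀ x y, Real.sqrt (sqnorm (f' x - f' y)) ≤ L * Real.sqrt (sqnorm (x - y)))
    (hstrong : ∀ x y, m * sqnorm (x - y) ≤ dot (f' x - f' y) (x - y))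
    (u : Fin n → ℝ) (hu : ∀ i, 0 < u i)
    (hUL : ((Matrix.diagonal u) - L • (1 : Matrix (Fin n) (Fin n) ℝ)).PosSemidef)
    (umax : ℝ) (humax : IsGreatest (Set.range u) umax)
    (xstar : Fin n → ℝ) (hxstar : IsMinOn (fun z => f z + g z) Set.univ xstar)
    (x xplus : Fin n → ℝ)
    (hxplus : IsMinOn (fun v => g v + (1 / 2) *
        dot ((x - (Matrix.diagonal u)⁻¹.mulVec (f' x)) - v)
            ((Matrix.diagonal u).mulVec ((x - (Matrix.diagonal u)⁻¹.mulVec (f' x)) - v)))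
      Set.univ xplus) :
    dot (xplus - xstar) ((Matrix.diagonal u).mulVec (xplus - xstar)) ≤
      (1 - m / umax) * dot (x - xstar) ((Matrix.diagonal u).mulVec (x - xstar)) :=
  linear_contraction_strongly_convex_general f g f' L m hm hgconv hdiff hsmooth hstrong u hu hUL
    umax humax xstar hxstar x xplus hxplus
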